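/- Let K ≥ 1 be an integer and let 0 < ρ < 1. Then the unique two-choice profile for (ρ, K) satisfies 1 − ρ ≤ P(ρ, K) ≤ 1 − ρ + 2ρ^{2^K − 1}. -/

import Mathlib

open Finset Real

noncomputable section

/-- Extend a vector `v = (v_0, …, v_K) ∈ ℝ^{K+1}` to `ℕ → ℝ` by zero,
implementing the convention `v_{K+1} = 0`. -/
def extProfile (K : ℕ) (v : Fin (K + 1) → ℝ) : ℕ → ℝ :=
  fun k => if h : k < K + 1 then v ⟨k, h⟩ else 0

/-- `v = (v_0, …, v_K)` is a two-choice profile for `(ρ, K)`: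
`1 = v_0 ≥ v_1 ≥ … ≥ v_K ≥ 0` and, with the convention `v_{K+1} = 0`,
`v_k − v_{k+1} = ρ (v_{k−1}² − v_k²)` for every `1 ≤ k ≤ K`. -/
def IsTwoChoiceProfile (ρ : ℝ) (K : ℕ) (v : Fin (K + 1) → ℝ) : Prop :=
  extProfile K v 0 = 1 ∧
  (∀ k < K, extProfile K v (k + 1) ≤ extProfile K v k) ∧
  0 ≤ extProfile K v K ∧
  ∀ k, 1 ≤ k → k ≤ K →
    extProfile K v k - extProfile K v (k + 1) =
      ρ * ((extProfile K v (k - 1)) ^ 2 - (extProfile K v k) ^ 2)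

/-- When it exists, the unique two-choice profile for `(ρ, K)`, denoted `ν_{ρ,K}`. -/
def nu (ρ : ℝ) (K : ℕ) : Fin (K + 1) → ℝ :=
  Classical.epsilon (IsTwoChoiceProfile ρ K)

/-- `ν_{ρ,K}` viewed as a function on `ℕ` (with `ν_{ρ,K}(K+1) = 0`). -/
def nuV (ρ : ℝ) (K : ℕ) : ℕ → ℝ := extProfile K (nu ρ K)

/-- `P(ρ, K) = (1 − ν_{ρ,K}(1)) + ν_{ρ,K}(K)`, the limiting proportion of
problematic (empty or full) queues. -/
def propProblematic (ρ : ℝ) (K : ℕ) : ℝ := (1 - nuV ρ K 1) + nuV ρ K K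

/-!
Summing the balance equations `v_j − v_{j+1} = ρ (v_{j−1}² − v_j²)` for `j = k+1, …, K` and
using `v_{K+1} = 0` gives `v_{k+1} = ρ (v_k² − v_K²)`. At `k = 0` this reads
`v_1 = ρ (1 − v_K²)`, so `P = 1 − ρ + ρ v_K² + v_K`; the lower bound follows and the upper bound
reduces to `v_K ≤ ρ^{2^K − 1}`, which is the doubly exponential decay forced by
`v_{k+1} ≤ ρ v_k²`.
-/

theorem pow_two_pow_succ_sub_one {M : Type*} [Monoid M] (x : M) (k : ℕ) :
    x ^ (2 ^ (k + 1) - 1) = x * (x ^ (2 ^ k - 1)) ^ 2 := by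
  have hk : 2 ^ (k + 1) - 1 = 1 + (2 ^ k - 1) * 2 := by
    have := Nat.one_le_two_pow (n := k)
    rw [pow_succ]; omega
  rw [hk, pow_add, pow_one, pow_mul]

theorem le_pow_two_pow_sub_one_of_succ_le_mul_sq {ρ : ℝ} (hρ : 0 ≤ ρ) {u : ℕ → ℝ}
    (h0 : u 0 ≤ 1) (hnonneg : ∀ k, 0 ≤ u k) (hstep : ∀ k, u (k + 1) ≤ ρ * u k ^ 2) (k : ℕ) :
    u k ≤ ρ ^ (2 ^ k - 1) := by
  induction k with
  | zero => simpa using h0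
  | succ k ih =>
    calc u (k + 1) ≤ ρ * u k ^ 2 := hstep k
      _ ≤ ρ * (ρ ^ (2 ^ k - 1)) ^ 2 := by gcongr; exact hnonneg k
      _ = ρ ^ (2 ^ (k + 1) - 1) := (pow_two_pow_succ_sub_one ρ k).symm

theorem extProfile_of_lt {K : ℕ} (v : Fin (K + 1) → ℝ) {k : ℕ} (hk : K < k) :
    extProfile K v k = 0 :=
  dif_neg (by omega)

namespace IsTwoChoiceProfile

variable {ρ : ℝ} {K : ℕ} {v : Fin (K + 1) → ℝ}

theorem antitone (hv : IsTwoChoiceProfile ρ K v) : Antitone (extProfile K v) := by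
  refine antitone_nat_of_succ_le fun k => ?_
  rcases lt_trichotomy k K with hk | rfl | hk
  · exact hv.2.1 k hk
  · rw [extProfile_of_lt v (Nat.lt_succ_self k)]; exact hv.2.2.1
  · rw [extProfile_of_lt v hk, extProfile_of_lt v (by omega)]

theorem nonneg (hv : IsTwoChoiceProfile ρ K v) (k : ℕ) : 0 ≤ extProfile K v k := by
  rcases le_or_gt k K with hk | hk
  · exact hv.2.2.1.trans (hv.antitone hk)
  · exact (extProfile_of_lt v hk).ge

theorem le_one (hv : IsTwoChoiceProfile ρ K v) (k : ℕ) : extProfile K v k ≤ 1 :=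
  hv.1 ▸ hv.antitone (Nat.zero_le k)

theorem succ_eq_mul_sq_sub (hv : IsTwoChoiceProfile ρ K v) {k : ℕ} (hk : k ≤ K) :
    extProfile K v (k + 1) = ρ * (extProfile K v k ^ 2 - extProfile K v K ^ 2) := by
  induction hk using Nat.decreasingInduction with
  | self => rw [extProfile_of_lt v (Nat.lt_succ_self K)]; ring
  | of_succ k hk ih =>
    have hbalance := hv.2.2.2 (k + 1) (Nat.succ_pos k) hk
    rw [Nat.add_sub_cancel] at hbalance
    linarith

theorem one_eq (hv : IsTwoChoiceProfile ρ K v) :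
    extProfile K v 1 = ρ * (1 - extProfile K v K ^ 2) := by
  simpa [hv.1] using hv.succ_eq_mul_sq_sub (Nat.zero_le K)

theorem succ_le_mul_sq (hv : IsTwoChoiceProfile ρ K v) (hρ : 0 ≤ ρ) (k : ℕ) :
    extProfile K v (k + 1) ≤ ρ * extProfile K v k ^ 2 := by
  rcases le_or_gt k K with hk | hk
  · rw [hv.succ_eq_mul_sq_sub hk]
    nlinarith [sq_nonneg (extProfile K v K)]
  · rw [extProfile_of_lt v (by omega)]; positivity

theorem le_pow_two_pow_sub_one (hv : IsTwoChoiceProfile ρ K v) (hρ : 0 ≤ ρ) (k : ℕ) :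
    extProfile K v k ≤ ρ ^ (2 ^ k - 1) :=
  le_pow_two_pow_sub_one_of_succ_le_mul_sq hρ (hv.le_one 0) hv.nonneg (hv.succ_le_mul_sq hρ) k

end IsTwoChoiceProfile

theorem problematic_bounds_subcritical_general (K : ℕ) (ρ : ℝ)
    (hρ0 : 0 < ρ) (hρ1 : ρ < 1)
    (v : Fin (K + 1) → ℝ) (hv : IsTwoChoiceProfile ρ K v) :
    1 - ρ ≤ (1 - extProfile K v 1) + extProfile K v K ∧
    (1 - extProfile K v 1) + extProfile K v K ≤ 1 - ρ + 2 * ρ ^ (2 ^ K - 1) := by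
  set x := extProfile K v K
  have hx0 : 0 ≤ x := hv.nonneg K
  have hx1 : x ≤ 1 := hv.le_one K
  have hxpow : x ≤ ρ ^ (2 ^ K - 1) := hv.le_pow_two_pow_sub_one hρ0.le K
  have hsq : ρ * x ^ 2 ≤ x := by nlinarith [mul_le_mul hρ1.le hx1 hx0 zero_le_one]
  rw [hv.one_eq]
  constructor <;> nlinarith [mul_nonneg hρ0.le (sq_nonneg x)]

/-- for `0 < ρ < 1`, `1 − ρ ≤ P(ρ, K) ≤ 1 − ρ + 2 ρ^{2^K − 1}`. -/
theorem problematic_bounds_subcritical (K : ℕ) (hK : 1 ≤ K) (ρ : ℝ)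
    (hρ0 : 0 < ρ) (hρ1 : ρ < 1)
    (v : Fin (K + 1) → ℝ) (hv : IsTwoChoiceProfile ρ K v) :
    1 - ρ ≤ (1 - extProfile K v 1) + extProfile K v K ∧
    (1 - extProfile K v 1) + extProfile K v K ≤ 1 - ρ + 2 * ρ ^ (2 ^ K - 1) :=
  problematic_bounds_subcritical_general K ρ hρ0 hρ1 v hv
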